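/- arXiv:2306.14989 — 2 statements merged into one kernel-verified Lean document; each statement's English description precedes it below -/
import Mathlib

section
/- Let ⟨A⟩ and ⟨B⟩ be numerical semigroups with Frobenius numbers F_A and F_B, and let a ∈ ⟨A⟩, b ∈ ⟨B⟩ with gcd(a,b) = 1, a,b ≥ 2. Then the Frobenius number of the gluing H = ⟨bA, aB⟩ is F_H = b·F_A + a·F_B + ab. -/
/-!
Bézout lets one write any `n` as `b x + a y` with `x` in the window `(F_A, F_A + a]`; when
`n > F_H` the cofactor `y` then exceeds `F_B`, so `x ∈ ⟨A⟩` and `y ∈ ⟨B⟩`. Conversely, if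
`F_H = b x + a y` with `x ∈ ⟨A⟩`, `y ∈ ⟨B⟩`, coprimality forces `x = F_A + a k`, `y = F_B + b l`
with `k + l = 1`; so `k ≤ 0` or `l ≤ 0`, and then `F_A = x + a (-k) ∈ ⟨A⟩` or
`F_B = y + b (-l) ∈ ⟨B⟩`, which is absurd.
-/

/-- F is the Frobenius number of the submonoid S of ℕ: every natural number strictly
larger than F lies in S, and F is either -1 or a natural number not in S. -/
def IsFrobenius (S : AddSubmonoid ℕ) (F : ℤ) : Prop :=
  (∀ n : ℕ, n ∉ S → (n : ℤ) ≤ F) ∧ (F = -1 ∨ ∃ n : ℕ, (n : ℤ) = F ∧ n ∉ S)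

namespace IsFrobenius

variable {S : AddSubmonoid ℕ} {F : ℤ}

theorem neg_one_le (h : IsFrobenius S F) : -1 ≤ F := by
  rcases h.2 with rfl | ⟨n, rfl, -⟩ <;> omega

theorem mem_of_lt (h : IsFrobenius S F) {n : ℕ} (hn : F < n) : n ∈ S := by
  by_contra hnS
  exact (h.1 n hnS).not_gt hn

theorem natCast_ne (h : IsFrobenius S F) {m : ℕ} (hm : m ∈ S) : (m : ℤ) ≠ F := by
  rcases h.2 with rfl | ⟨n, rfl, hnS⟩
  · omega
  · exact fun hmn => hnS (Int.ofNat_inj.1 hmn ▸ hm)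

theorem natCast_sub_mul_ne (h : IsFrobenius S F) {x a : ℕ} (hx : x ∈ S) (ha : a ∈ S) {k : ℤ}
    (hk : k ≤ 0) : (x : ℤ) - a * k ≠ F := by
  obtain ⟨j, hj⟩ := Int.eq_ofNat_of_zero_le (neg_nonneg.2 hk)
  have hmem : x + a * j ∈ S := S.add_mem hx (mul_comm a j ▸ S.nsmul_mem ha j)
  convert h.natCast_ne hmem using 1
  push_cast
  rw [← hj]
  ring

end IsFrobenius

theorem AddSubmonoid.mem_closure_image_mul_union_iff {R : Type*} [NonUnitalNonAssocSemiring R]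
    (s t : Set R) (a b n : R) :
    n ∈ closure ((fun x => b * x) '' s ∪ (fun x => a * x) '' t) ↔
      ∃ x ∈ closure s, ∃ y ∈ closure t, n = b * x + a * y := by
  simp only [closure_union, mem_sup, ← AddMonoidHom.coe_mulLeft, ← AddMonoidHom.map_mclosure,
    mem_map, eq_comm (a := n)]
  constructor
  · rintro ⟨-, ⟨x, hx, rfl⟩, -, ⟨y, hy, rfl⟩, rfl⟩
    exact ⟨x, hx, y, hy, rfl⟩
  · rintro ⟨x, hx, y, hy, rfl⟩
    exact ⟨_, ⟨x, hx, rfl⟩, _, ⟨y, hy, rfl⟩, rfl⟩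

theorem Int.exists_Ioc_dvd_sub_mul {a b : ℤ} (hab : IsCoprime a b) (ha : 0 < a) (n c : ℤ) :
    ∃ x, c < x ∧ x ≤ c + a ∧ a ∣ n - b * x := by
  obtain ⟨u, v, huv⟩ := hab
  let m := n * v - c - 1
  refine ⟨c + 1 + m % a, by linarith [m.emod_nonneg ha.ne'], by linarith [m.emod_lt_of_pos ha],
    n * u + b * (m / a), ?_⟩
  linear_combination (-n) * huv - b * Int.emod_add_mul_ediv m a

namespace IsFrobenius

variable {SA SB : AddSubmonoid ℕ} {FA FB : ℤ} {a b : ℕ}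

theorem exists_mem_eq_mul_add_mul (hFA : IsFrobenius SA FA) (hFB : IsFrobenius SB FB)
    (hab : IsCoprime (a : ℤ) b) (ha : 0 < a) {n : ℕ} (hn : b * FA + a * FB + a * b < n) :
    ∃ x ∈ SA, ∃ y ∈ SB, n = b * x + a * y := by
  obtain ⟨x, hFAx, hxa, y, hy⟩ := Int.exists_Ioc_dvd_sub_mul hab (by exact_mod_cast ha) n FA
  have hFBy : FB < y := by
    have hbx : (b : ℤ) * x ≤ b * (FA + a) := by gcongr
    exact lt_of_mul_lt_mul_left (by linarith) (by positivity : (0 : ℤ) ≤ a)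
  lift x to ℕ using by linarith [hFA.neg_one_le]
  lift y to ℕ using by linarith [hFB.neg_one_le]
  have hn : (n : ℤ) = b * x + a * y := by linarith
  exact ⟨x, hFA.mem_of_lt hFAx, y, hFB.mem_of_lt hFBy, by exact_mod_cast hn⟩

theorem mul_add_mul_ne (hFA : IsFrobenius SA FA) (hFB : IsFrobenius SB FB) (haS : a ∈ SA)
    (hbS : b ∈ SB) (hab : IsCoprime (a : ℤ) b) (ha : 0 < a) (hb : 0 < b) {x y : ℕ} (hx : x ∈ SA)
    (hy : y ∈ SB) : (b * x + a * y : ℤ) ≠ b * FA + a * FB + a * b := by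
  intro hxy
  obtain ⟨k, hk⟩ : (a : ℤ) ∣ x - FA :=
    hab.dvd_of_dvd_mul_left ⟨FB + b - y, by linear_combination hxy⟩
  obtain ⟨l, hl⟩ : (b : ℤ) ∣ y - FB :=
    hab.symm.dvd_of_dvd_mul_left ⟨FA + a - x, by linear_combination hxy⟩
  have hkl : (a * b : ℤ) * (k + l - 1) = 0 := by linear_combination hxy - b * hk - a * hl
  have hkl : k + l = 1 := by simpa [ha.ne', hb.ne', sub_eq_zero] using hkl
  rcases le_or_gt k 0 with hk0 | hk0
  · exact hFA.natCast_sub_mul_ne hx haS hk0 (by linear_combination hk)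
  · exact hFB.natCast_sub_mul_ne hy hbS (by omega : l ≤ 0) (by linear_combination hl)

end IsFrobenius

theorem frobenius_of_gluing_general (A B : Set ℕ)
    (FA FB : ℤ) (hFA : IsFrobenius (AddSubmonoid.closure A) FA)
    (hFB : IsFrobenius (AddSubmonoid.closure B) FB)
    (a b : ℕ) (ha : a ∈ AddSubmonoid.closure A) (hb : b ∈ AddSubmonoid.closure B)
    (hgcd : Nat.gcd a b = 1) (ha2 : 2 ≤ a) (hb2 : 2 ≤ b) :
    IsFrobenius
      (AddSubmonoid.closure ((fun x => b * x) '' A ∪ (fun x => a * x) '' B))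
      (b * FA + a * FB + a * b) := by
  have hab : IsCoprime (a : ℤ) b := Nat.isCoprime_iff_coprime.2 hgcd
  refine ⟨fun n hn => ?_, Or.inr ?_⟩
  · by_contra! hlt
    exact hn ((AddSubmonoid.mem_closure_image_mul_union_iff A B a b n).2
      (hFA.exists_mem_eq_mul_add_mul hFB hab (by omega) hlt))
  · have hF0 : 0 ≤ b * FA + a * FB + (a : ℤ) * b := by
      nlinarith [hFA.neg_one_le, hFB.neg_one_le]
    lift b * FA + a * FB + (a : ℤ) * b to ℕ using hF0 with F hF
    refine ⟨F, rfl, fun hmem => ?_⟩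
    obtain ⟨x, hx, y, hy, rfl⟩ := (AddSubmonoid.mem_closure_image_mul_union_iff A B a b F).1 hmem
    exact hFA.mul_add_mul_ne hFB ha hb hab (by omega) (by omega) hx hy (by exact_mod_cast hF)

/-- The Frobenius number of the gluing ⟨bA, aB⟩ of two numerical semigroups ⟨A⟩ and ⟨B⟩
with gcd(a,b) = 1, a, b ≥ 2, is b·F_A + a·F_B + a·b. -/
theorem frobenius_of_gluing (A B : Set ℕ)
    (hA : {n : ℕ | n ∉ AddSubmonoid.closure A}.Finite)
    (hB : {n : ℕ | n ∉ AddSubmonoid.closure B}.Finite)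
    (FA FB : ℤ) (hFA : IsFrobenius (AddSubmonoid.closure A) FA)
    (hFB : IsFrobenius (AddSubmonoid.closure B) FB)
    (a b : ℕ) (ha : a ∈ AddSubmonoid.closure A) (hb : b ∈ AddSubmonoid.closure B)
    (hgcd : Nat.gcd a b = 1) (ha2 : 2 ≤ a) (hb2 : 2 ≤ b) :
    IsFrobenius
      (AddSubmonoid.closure ((fun x => b * x) '' A ∪ (fun x => a * x) '' B))
      (b * FA + a * FB + a * b) :=
  frobenius_of_gluing_general A B FA FB hFA hFB a b ha hb hgcd ha2 hb2
end

section
/- Let H = ⟨a_1,…,a_h⟩ be a numerical semigroup, a = c_1 a_1 + ⋯ + c_h a_h ∈ H with c_i ∈ ℕ, and b ∈ ℕ with gcd(a,b) = 1. Set H' = ⟨a, b a_1, …, b a_h⟩. If k[[H]] ≅ k[[x_1,…,x_h]]/I_H, then k[[H']] ≅ k[[x_1,…,x_h,x_{h+1}]]/(I_H + (f)) where f = x_{h+1}^b − x_1^{c_1}⋯x_h^{c_h}. -/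
/-!
Write `y = X (Fin.last h)` and `f = y ^ b - x ^ c`. Both `ι (I_H)` and `f` lie in the kernel of
`φ'`: `φ' ∘ ι` is `φ` followed by `t ↦ t ^ b`, and both monomials of `f` have weight `b * aa`.
Conversely, `x ^ c` lies in the maximal ideal of `A = k⟦x_1, …, x_h⟧`, so Weierstrass division by
`f` in `A⟦y⟧` writes any `g` as `f * q + ∑_{j < b} y ^ j * ι (r_j)`. If `φ' g = 0`, then
`∑_{j < b} t ^ (aa * j) * φ (r_j) (t ^ b) = 0`; as `gcd aa b = 1`, the exponents `aa * j` are
pairwise incongruent modulo `b`, so every `φ (r_j)` vanishes. Hence `ker φ' = ι (I_H) + (f)`.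
-/

open Finset Finsupp

namespace PowerSeries

theorem exists_eq_X_pow_sub_C_mul_add_sum {A : Type*} [CommRing A] {I : Ideal A}
    [IsAdicComplete I A] {m : A} (hm : m ∈ I) {b : ℕ} (hb : b ≠ 0) (F : A⟦X⟧) :
    ∃ (q : A⟦X⟧) (r : ℕ → A), F = (X ^ b - C m) * q + ∑ j ∈ range b, C (r j) * X ^ j := by
  nontriviality A
  set g : Polynomial A := .X ^ b - .C m
  have hdeg : g.natDegree = b := Polynomial.natDegree_X_pow_sub_C
  have hg : g.IsDistinguishedAt I := by
    refine ⟨⟨fun {n} hn => ?_⟩, Polynomial.monic_X_pow_sub_C m hb⟩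
    rw [hdeg] at hn
    rcases n with _ | n
    · simpa [g, Polynomial.coeff_X_pow, hb.symm] using hm
    · simp [g, Polynomial.coeff_X_pow, hn.ne]
  -- `A[X] ⧸ (g) ≃ A⟦X⟧ ⧸ (g)`, so `F` is congruent to a polynomial, to be divided by the monic `g`.
  obtain ⟨p, hp⟩ := hg.algEquivQuotient.surjective (Ideal.Quotient.mk _ F)
  obtain ⟨p, rfl⟩ := Ideal.Quotient.mk_surjective p
  obtain ⟨q, hq⟩ := Ideal.mem_span_singleton'.1 (Ideal.Quotient.eq.1 hp.symm)
  replace hq : q * ↑g = F - ↑p := hq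
  have hdiv : (p : A⟦X⟧) = g * ↑(p /ₘ g) + ↑(p %ₘ g) := by
    rw [← Polynomial.coe_mul, ← Polynomial.coe_add, add_comm, Polynomial.modByMonic_add_div]
  have hmod : (p %ₘ g).natDegree < b := hdeg ▸ Polynomial.natDegree_modByMonic_lt p hg.monic
    fun hg1 => by simpa [hdeg, hb] using congrArg Polynomial.natDegree hg1
  have hsum : ((p %ₘ g : Polynomial A) : A⟦X⟧) = ∑ j ∈ range b, C ((p %ₘ g).coeff j) * X ^ j := by
    conv_lhs => rw [Polynomial.as_sum_range' _ _ hmod]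
    simp only [← Polynomial.coeToPowerSeries.ringHom_apply, map_sum]
    simp [Polynomial.coe_monomial, PowerSeries.monomial_eq_C_mul_X_pow]
  have hG : ((g : Polynomial A) : A⟦X⟧) = X ^ b - C m := by simp [g]
  refine ⟨q + ↑(p /ₘ g), (p %ₘ g).coeff, ?_⟩
  rw [← hsum]
  rw [hG] at hq hdiv
  linear_combination hdiv - hq

theorem eq_zero_of_sum_X_pow_mul_expand_eq_zero {R : Type*} [CommRing R] {a b : ℕ} (hb : b ≠ 0)
    (hab : Nat.Coprime a b) {p : ℕ → R⟦X⟧}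
    (h : ∑ j ∈ range b, X ^ (a * j) * expand b hb (p j) = 0) {j : ℕ} (hj : j < b) : p j = 0 := by
  ext k
  have := congrArg (coeff (b * k + a * j)) h
  rw [map_sum, Finset.sum_eq_single j, coeff_X_pow_mul', if_pos (by omega), add_tsub_cancel_right,
    coeff_expand_mul] at this
  · simpa using this
  · intro i hi hij
    rw [coeff_X_pow_mul']
    split_ifs with hle
    · refine coeff_expand_of_not_dvd b hb _ fun hdvd => hij ?_
      have hcongr : i * a ≡ j * a [MOD b] := by
        rw [mul_comm i, mul_comm j]
        exact ((Nat.modEq_iff_dvd' hle).2 hdvd).trans (by simp [Nat.ModEq])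
      exact (Nat.ModEq.cancel_right_of_coprime hab.symm hcongr).eq_of_lt_of_lt (mem_range.1 hi) hj
    · rfl
  · exact fun hj' => absurd (mem_range.2 hj) hj'

end PowerSeries

namespace MvPowerSeries

variable {σ τ R : Type*} [CommRing R]

/-- `ψ` is the substitution `X i ↦ t ^ w i`, described through its coefficients. -/
def IsWeightedSubst (w : σ → ℕ) (ψ : MvPowerSeries σ R →+* PowerSeries R) : Prop :=
  ∀ p n, PowerSeries.coeff n (ψ p) = ∑ᶠ e ∈ {e : σ →₀ ℕ | weight w e = n}, coeff e p

namespace IsWeightedSubst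

variable {w : σ → ℕ} {ψ ψ' : MvPowerSeries σ R →+* PowerSeries R}

theorem ext (hψ : IsWeightedSubst w ψ) (hψ' : IsWeightedSubst w ψ') : ψ = ψ' :=
  RingHom.ext fun p => PowerSeries.ext fun n => by rw [hψ, hψ']

theorem map_monomial (hψ : IsWeightedSubst w ψ) (e : σ →₀ ℕ) (r : R) :
    ψ (monomial e r) = PowerSeries.monomial (weight w e) r := by
  classical
  ext n
  rw [hψ, finsum_mem_def, finsum_eq_single _ e fun x hx => by simp [coeff_monomial, hx]]
  simp [Set.indicator_apply, PowerSeries.coeff_monomial, eq_comm]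

theorem map_X (hψ : IsWeightedSubst w ψ) (i : σ) : ψ (X i) = PowerSeries.X ^ w i := by
  rw [X, hψ.map_monomial, weight_single, one_smul, PowerSeries.X_pow_eq]

theorem weight_pos [Nontrivial R] (hψ : IsWeightedSubst w ψ) (i : σ) : 0 < w i := by
  by_contra! hi
  have hunit : IsUnit (X i - 1 : MvPowerSeries σ R) := by
    rw [isUnit_iff_constantCoeff]
    simp
  have := hunit.map ψ
  rw [map_sub, hψ.map_X, Nat.le_zero.1 hi, pow_zero, map_one, sub_self] at this
  exact not_isUnit_zero this

theorem comp_rename (hψ : IsWeightedSubst w ψ) (e : τ ↪ σ) :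
    IsWeightedSubst (w ∘ e) (ψ.comp (rename e).toRingHom) := by
  intro p n
  have hweight (x : τ →₀ ℕ) : weight w (embDomain e x) = weight (w ∘ e) x := by
    simp [weight_apply, sum_embDomain]
  rw [RingHom.comp_apply, hψ]
  calc ∑ᶠ y ∈ {y : σ →₀ ℕ | weight w y = n}, coeff y (rename e p)
      = ∑ᶠ y ∈ embDomain e '' {x | weight (w ∘ e) x = n}, coeff y (rename e p) := by
        refine finsum_mem_inter_support_eq' _ _ _ fun y hy => ?_
        obtain ⟨x, rfl⟩ : y ∈ Set.range (embDomain e) := by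
          by_contra hx
          refine hy (coeff_rename_eq_zero _ p ?_)
          rintro ⟨x, rfl⟩
          exact hx ⟨x, embDomain_eq_mapDomain e x⟩
        simp [(embDomain_injective e).eq_iff, hweight]
    _ = ∑ᶠ x ∈ {x : τ →₀ ℕ | weight (w ∘ e) x = n}, coeff x p := by
        rw [finsum_mem_image (embDomain_injective e).injOn]
        simp

theorem expand (hψ : IsWeightedSubst w ψ) {b : ℕ} (hb : b ≠ 0) :
    IsWeightedSubst (b • w) ((PowerSeries.expand b hb).toRingHom.comp ψ) := by
  intro p n
  have hweight (e : σ →₀ ℕ) : weight (b • w) e = b * weight w e := by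
    simp [weight_apply, Finsupp.mul_sum, mul_left_comm]
  simp only [RingHom.comp_apply, AlgHom.toRingHom_eq_coe, RingHom.coe_coe,
    PowerSeries.coeff_expand, hweight]
  split_ifs with hn
  · obtain ⟨k, rfl⟩ := hn
    simp [hb, hψ p k]
  · exact (finsum_mem_eq_zero_of_forall_eq_zero fun e he => (hn ⟨_, he.symm⟩).elim).symm

theorem map_prod_X_pow [Fintype σ] (hψ : IsWeightedSubst w ψ) (c : σ → ℕ) :
    ψ (∏ i, X i ^ c i) = PowerSeries.X ^ ∑ i, c i * w i := by
  simp [map_prod, hψ.map_X, ← pow_mul, prod_pow_eq_pow_sum, mul_comm]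

end IsWeightedSubst

theorem prod_X_pow_mem_span_range_X [Fintype σ] {c : σ → ℕ} {i : σ} (hi : c i ≠ 0) :
    ∏ j, (X j : MvPowerSeries σ R) ^ c j ∈ Ideal.span (Set.range X) :=
  Ideal.mem_of_dvd _ ((dvd_pow_self _ hi).trans (dvd_prod_of_mem _ (mem_univ i)))
    (Ideal.subset_span ⟨i, rfl⟩)

variable {n : ℕ}

theorem coeff_rename_castSucc (p : MvPowerSeries (Fin n) R) (e : Fin (n + 1) →₀ ℕ) :
    coeff e (rename Fin.castSucc p) = if e (Fin.last n) = 0 then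
      coeff (comapDomain Fin.castSucc e (Fin.castSucc_injective n).injOn) p else 0 := by
  have hrange : e ∈ Set.range (mapDomain Fin.castSucc) ↔ e (Fin.last n) = 0 := by
    rw [mem_range_mapDomain_iff _ (Fin.castSucc_injective n)]
    refine ⟨fun h => h _ fun ⟨i, hi⟩ => Fin.castSucc_ne_last i hi, fun h i hi => ?_⟩
    obtain rfl : i = Fin.last n := Fin.ext (by simp at hi ⊢; omega)
    exact h
  split_ifs with he
  · obtain ⟨y, rfl⟩ := hrange.2 he
    rw [comapDomain_mapDomain _ (Fin.castSucc_injective n)]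
    exact embDomain_eq_mapDomain Fin.castSuccEmb y ▸ coeff_embDomain_rename Fin.castSuccEmb p y
  · exact coeff_rename_eq_zero _ p (hrange.not.2 he)

variable (R n) in
noncomputable def lastVarEquiv :
    MvPowerSeries (Fin (n + 1)) R ≃ₐ[R] PowerSeries (MvPowerSeries (Fin n) R) :=
  (renameEquiv R finSuccEquivLast).trans (optionEquivLeft (Fin n) R)

@[simp]
theorem lastVarEquiv_X_last : lastVarEquiv R n (X (Fin.last n)) = PowerSeries.X := by
  simp [lastVarEquiv]

@[simp]
theorem lastVarEquiv_rename_castSucc (p : MvPowerSeries (Fin n) R) :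
    lastVarEquiv R n (rename Fin.castSucc p) = PowerSeries.C p := by
  have hsome : (finSuccEquivLast : Fin (n + 1) ≃ Option (Fin n)) ∘ Fin.castSucc = Option.some := by
    funext i; simp
  show optionEquivLeft _ _ (rename finSuccEquivLast (rename Fin.castSucc p)) = _
  simp only [rename_rename, hsome]
  ext k x
  rw [coeff_coeff_optionEquivLeft, PowerSeries.coeff_C]
  split_ifs with hk
  · subst hk
    have : optionElim 0 x = embDomain Function.Embedding.some x := by
      ext (_ | i) <;> simp
    rw [this]
    exact coeff_embDomain_rename Function.Embedding.some p x
  · refine coeff_rename_eq_zero _ p ?_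
    rintro ⟨y, hy⟩
    have := congrArg (· none) hy
    simp only [optionElim_apply_none] at this
    rw [mapDomain_of_notMem_range _ _ (by simp)] at this
    exact hk this.symm

theorem exists_eq_X_last_pow_sub_mul_add_sum {m : MvPowerSeries (Fin n) R}
    (hm : m ∈ Ideal.span (Set.range X)) {b : ℕ} (hb : b ≠ 0) (G : MvPowerSeries (Fin (n + 1)) R) :
    ∃ (Q : MvPowerSeries (Fin (n + 1)) R) (r : ℕ → MvPowerSeries (Fin n) R),
      G = (X (Fin.last n) ^ b - rename Fin.castSucc m) * Q +
        ∑ j ∈ range b, X (Fin.last n) ^ j * rename Fin.castSucc (r j) := by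
  obtain ⟨q, r, h⟩ := PowerSeries.exists_eq_X_pow_sub_C_mul_add_sum hm hb (lastVarEquiv R n G)
  refine ⟨(lastVarEquiv R n).symm q, r, (lastVarEquiv R n).injective ?_⟩
  simp [h, mul_comm]

theorem ker_eq_map_rename_sup_span {w : Fin n → ℕ} {b d : ℕ}
    {ψ : MvPowerSeries (Fin n) R →+* PowerSeries R}
    {ψ' : MvPowerSeries (Fin (n + 1)) R →+* PowerSeries R}
    (hψ : IsWeightedSubst w ψ) (hψ' : IsWeightedSubst (Fin.snoc (α := fun _ => ℕ) (b • w) d) ψ')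
    (hb : b ≠ 0) (hdb : d.Coprime b) {m : MvPowerSeries (Fin n) R}
    (hm : m ∈ Ideal.span (Set.range X)) (hψm : ψ m = PowerSeries.X ^ d) :
    RingHom.ker ψ' = Ideal.map (rename (R := R) Fin.castSucc) (RingHom.ker ψ) ⊔
      Ideal.span {X (Fin.last n) ^ b - rename Fin.castSucc m} := by
  have hcomp (p : MvPowerSeries (Fin n) R) :
      ψ' (rename Fin.castSucc p) = PowerSeries.expand b hb (ψ p) := by
    have h := (hψ'.comp_rename Fin.castSuccEmb).ext (by simpa using hψ.expand hb)
    exact RingHom.congr_fun h p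
  have hlast : ψ' (X (Fin.last n)) = PowerSeries.X ^ d := by rw [hψ'.map_X, Fin.snoc_last]
  have hf : ψ' (X (Fin.last n) ^ b - rename Fin.castSucc m) = 0 := by
    rw [map_sub, map_pow, hlast, hcomp, hψm, map_pow, PowerSeries.expand_X, ← pow_mul, ← pow_mul,
      mul_comm, sub_self]
  apply le_antisymm
  · intro G hG
    obtain ⟨Q, r, rfl⟩ := exists_eq_X_last_pow_sub_mul_add_sum hm hb G
    have hr (j : ℕ) (hj : j < b) : ψ (r j) = 0 := by
      refine PowerSeries.eq_zero_of_sum_X_pow_mul_expand_eq_zero (p := fun j => ψ (r j)) hb hdb ?_ hj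
      simpa [hf, hlast, hcomp, ← pow_mul] using hG
    refine Ideal.add_mem _ (Ideal.mem_sup_right (Ideal.mul_mem_right _ _
      (Ideal.mem_span_singleton_self _))) (Ideal.mem_sup_left (Ideal.sum_mem _ fun j hj =>
        Ideal.mul_mem_left _ _ (Ideal.mem_map_of_mem _ (hr j (mem_range.1 hj)))))
  · refine sup_le (Ideal.map_le_iff_le_comap.2 fun p hp => ?_)
      ((Ideal.span_singleton_le_iff_mem _).2 hf)
    rw [Ideal.mem_comap, RingHom.mem_ker, hcomp, RingHom.mem_ker.1 hp, map_zero]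

end MvPowerSeries

open MvPowerSeries in
theorem gluing_presentation_general (k : Type) [Field k] (h : ℕ) (a : Fin h → ℕ)
    (c : Fin h → ℕ) (aa : ℕ) (haa : aa = ∑ i, c i * a i)
    (b : ℕ) (hgcd : Nat.gcd aa b = 1)
    (φ : MvPowerSeries (Fin h) k →+* PowerSeries k)
    (hφ : ∀ (f : MvPowerSeries (Fin h) k) (n : ℕ),
      PowerSeries.coeff n (φ f) =
        ∑ᶠ e ∈ {e : Fin h →₀ ℕ | ∑ i, e i * a i = n}, MvPowerSeries.coeff e f)
    (φ' : MvPowerSeries (Fin (h + 1)) k →+* PowerSeries k)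
    (hφ' : ∀ (f : MvPowerSeries (Fin (h + 1)) k) (n : ℕ),
      PowerSeries.coeff n (φ' f) =
        ∑ᶠ e ∈ {e : Fin (h + 1) →₀ ℕ |
            (∑ i : Fin h, e i.castSucc * (b * a i)) + e (Fin.last h) * aa = n},
          MvPowerSeries.coeff e f)
    (ι : MvPowerSeries (Fin h) k →+* MvPowerSeries (Fin (h + 1)) k)
    (hι : ∀ (f : MvPowerSeries (Fin h) k) (e : Fin (h + 1) →₀ ℕ),
      MvPowerSeries.coeff e (ι f) =
        if e (Fin.last h) = 0 then
          MvPowerSeries.coeff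
            (Finsupp.comapDomain Fin.castSucc e ((Fin.castSucc_injective h).injOn)) f
        else 0) :
    Nonempty ((MvPowerSeries (Fin (h + 1)) k ⧸
        (Ideal.map ι (RingHom.ker φ) ⊔
          Ideal.span {(MvPowerSeries.X (Fin.last h) : MvPowerSeries (Fin (h + 1)) k) ^ b -
            ∏ i : Fin h,
              (MvPowerSeries.X i.castSucc : MvPowerSeries (Fin (h + 1)) k) ^ c i})) ≃+*
      ↥φ'.range) := by
  have hW : IsWeightedSubst a φ := fun p n => by simpa [weight_eq_sum] using hφ p n
  have hW' : IsWeightedSubst (Fin.snoc (α := fun _ => ℕ) (b • a) aa) φ' := fun p n => by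
    simpa [weight_eq_sum, Fin.sum_univ_castSucc] using hφ' p n
  obtain ⟨i₀, hi₀⟩ : ∃ i, c i ≠ 0 := by
    by_contra! hc
    simpa [haa, hc] using hW'.weight_pos (Fin.last h)
  have hb : b ≠ 0 := by
    rintro rfl
    simpa using hW'.weight_pos i₀.castSucc
  have hι' : ι = (rename Fin.castSucc).toRingHom := RingHom.ext fun p => MvPowerSeries.ext fun e => by
    rw [hι, AlgHom.toRingHom_eq_coe, RingHom.coe_coe, coeff_rename_castSucc]
  have hprod : ∏ i : Fin h, (X i.castSucc : MvPowerSeries (Fin (h + 1)) k) ^ c i =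
      rename Fin.castSucc (∏ i, X i ^ c i) := by
    simp [map_prod]
  have hker : Ideal.map ι (RingHom.ker φ) ⊔ Ideal.span {X (Fin.last h) ^ b -
      ∏ i : Fin h, (X i.castSucc : MvPowerSeries (Fin (h + 1)) k) ^ c i} = RingHom.ker φ' := by
    rw [hprod, hι']
    exact (ker_eq_map_rename_sup_span hW hW' hb hgcd (prod_X_pow_mem_span_range_X hi₀)
      (haa ▸ hW.map_prod_X_pow c)).symm
  exact ⟨(Ideal.quotEquivOfEq hker).trans (RingHom.quotientKerEquivRange φ')⟩

/-- Cohen presentation of a gluing: let H = ⟨a_1,...,a_h⟩, aa = ∑ c_i a_i ∈ H, and b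
coprime to aa, H' = ⟨aa, b a_1, ..., b a_h⟩.  Let φ (resp. φ') be the substitution
x_i ↦ t^{a_i} (resp. x_i ↦ t^{b a_i}, x_{h+1} ↦ t^{aa}), characterized on
coefficients, and ι the inclusion of power series rings.  With I_H = ker φ, the
quotient of k[[x_1,...,x_{h+1}]] by (I_H, x_{h+1}^b - ∏ x_i^{c_i}) is isomorphic to
k[[H']] = range φ'. -/
theorem gluing_presentation (k : Type) [Field k] (h : ℕ) (a : Fin h → ℕ)
    (hapos : ∀ i, 0 < a i)
    (hH : {n : ℕ | n ∉ AddSubmonoid.closure (Set.range a)}.Finite)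
    (c : Fin h → ℕ) (aa : ℕ) (haa : aa = ∑ i, c i * a i)
    (b : ℕ) (hgcd : Nat.gcd aa b = 1)
    (φ : MvPowerSeries (Fin h) k →+* PowerSeries k)
    (hφ : ∀ (f : MvPowerSeries (Fin h) k) (n : ℕ),
      PowerSeries.coeff n (φ f) =
        ∑ᶠ e ∈ {e : Fin h →₀ ℕ | ∑ i, e i * a i = n}, MvPowerSeries.coeff e f)
    (φ' : MvPowerSeries (Fin (h + 1)) k →+* PowerSeries k)
    (hφ' : ∀ (f : MvPowerSeries (Fin (h + 1)) k) (n : ℕ),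
      PowerSeries.coeff n (φ' f) =
        ∑ᶠ e ∈ {e : Fin (h + 1) →₀ ℕ |
            (∑ i : Fin h, e i.castSucc * (b * a i)) + e (Fin.last h) * aa = n},
          MvPowerSeries.coeff e f)
    (ι : MvPowerSeries (Fin h) k →+* MvPowerSeries (Fin (h + 1)) k)
    (hι : ∀ (f : MvPowerSeries (Fin h) k) (e : Fin (h + 1) →₀ ℕ),
      MvPowerSeries.coeff e (ι f) =
        if e (Fin.last h) = 0 then
          MvPowerSeries.coeff
            (Finsupp.comapDomain Fin.castSucc e ((Fin.castSucc_injective h).injOn)) f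
        else 0) :
    Nonempty ((MvPowerSeries (Fin (h + 1)) k ⧸
        (Ideal.map ι (RingHom.ker φ) ⊔
          Ideal.span {(MvPowerSeries.X (Fin.last h) : MvPowerSeries (Fin (h + 1)) k) ^ b -
            ∏ i : Fin h,
              (MvPowerSeries.X i.castSucc : MvPowerSeries (Fin (h + 1)) k) ^ c i})) ≃+*
      ↥φ'.range) :=
  gluing_presentation_general k h a c aa haa b hgcd φ hφ φ' hφ' ι hι
end
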